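/- Let Φ(θ¹,θ²) = −√(θ¹θ²) − (1/2)log(−θ²) on Ω = {(θ¹,θ²) ∈ ℝ² : θ¹ < 0, θ² < 0}. Then at every point of Ω: (i) the Hessian of Φ is positive definite (so Φ is strictly convex); (ii) det Hess Φ = √(θ¹θ²) / ( 8 (θ¹)² (θ²)² ); (iii) the Hessian of log det Hess Φ equals the diagonal matrix diag( 3/(2(θ¹)²), 3/(2(θ²)²) ), which is positive definite; consequently the matrix −Hess(log det Hess Φ) is negative definite, i.e. the Kähler manifold 𝕄_InvGau has negative Ricci curvature. -/

import Mathlib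

open Real Matrix

/-- Partial derivative of `f : ℝⁿ → ℝ` in the `i`-th coordinate direction. -/
noncomputable def pd {n : ℕ} (i : Fin n) (f : (Fin n → ℝ) → ℝ) : (Fin n → ℝ) → ℝ :=
  fun x => fderiv ℝ f x (Pi.single i 1)

/-- Hessian matrix of second partial derivatives of `f : ℝⁿ → ℝ`. -/
noncomputable def hessian {n : ℕ} (f : (Fin n → ℝ) → ℝ) (x : Fin n → ℝ) :
    Matrix (Fin n) (Fin n) ℝ :=
  Matrix.of fun i j => pd i (pd j f) x

/-- The log-partition function of the inverse Gaussian family in natural parameters,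
on `Ω = {θ¹ < 0, θ² < 0}`. -/
noncomputable def ΦInvGau (θ : Fin 2 → ℝ) : ℝ :=
  -Real.sqrt (θ 0 * θ 1) - (1 / 2) * Real.log (-(θ 1))

/-!
Write `s = √(θ 0 * θ 1)`. Everything is computed on the open set `0 < θ 0 * θ 1`, where
`s ^ 2 = θ 0 * θ 1` turns the partial derivatives of `s` into `s / (2 * θ i)`. The gradient of `Φ`
is then `(-s / (2 θ 0), -(s + 1) / (2 θ 1))`, and `Hess Φ` is a matrix of rational functions of
`s` and `θ` whose determinant `s / (8 θ 0² θ 1²)` is a plain ring identity. Hence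
`log det Hess Φ = -(3/2) (log θ 0 + log θ 1) - log 8` is a sum of functions of one coordinate each,
and its Hessian is diagonal with entries `3 / (2 θ i²)`. Positive definiteness of `Hess Φ` follows
from its positive `(0, 0)` entry and positive determinant.
-/

open Filter Topology ContinuousLinearMap

section PartialDerivatives

variable {n : ℕ} {f g : (Fin n → ℝ) → ℝ} {x : Fin n → ℝ}

theorem HasFDerivAt.pd_eq {f' : (Fin n → ℝ) →L[ℝ] ℝ} (h : HasFDerivAt f f' x) (i : Fin n) :
    pd i f x = f' (Pi.single i 1) := by
  rw [pd, h.fderiv]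

theorem Filter.EventuallyEq.pd_eq (h : f =ᶠ[𝓝 x] g) (i : Fin n) : pd i f x = pd i g x := by
  simp only [pd, h.fderiv_eq]

theorem Filter.EventuallyEq.pd (h : f =ᶠ[𝓝 x] g) (i : Fin n) : pd i f =ᶠ[𝓝 x] pd i g :=
  h.eventuallyEq_nhds.mono fun _ hy => hy.pd_eq i

theorem hessian_apply_eq_of_eventuallyEq_pd {j : Fin n} {g' : (Fin n → ℝ) →L[ℝ] ℝ}
    (hf : pd j f =ᶠ[𝓝 x] g) (hg : HasFDerivAt g g' x) (i : Fin n) :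
    hessian f x i j = g' (Pi.single i 1) := by
  rw [hessian, of_apply, hf.pd_eq, hg.pd_eq]

theorem Filter.EventuallyEq.hessian_eq (h : f =ᶠ[𝓝 x] g) : hessian f x = hessian g x := by
  ext i j
  exact (h.pd j).pd_eq i

/- `log (y i)` is Mathlib's `log |y i|`, whose derivative is `(y i)⁻¹` on both sides of `0`. -/
theorem pd_const_mul_sum_log_add_const (hx : ∀ i, x i ≠ 0) (c d : ℝ) (j : Fin n) :
    pd j (fun y => c * ∑ i, log (y i) + d) x = c / x j := by
  have h : HasFDerivAt (fun y : Fin n → ℝ => c * ∑ i, log (y i) + d)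
      (c • ∑ i, (x i)⁻¹ • (proj i : (Fin n → ℝ) →L[ℝ] ℝ)) x :=
    ((HasFDerivAt.fun_sum fun i _ =>
      (hasFDerivAt_apply (𝕜 := ℝ) i x).log (hx i)).const_mul c).add_const d
  simp [h.pd_eq, Pi.single_apply, div_eq_mul_inv]

theorem hessian_const_mul_sum_log_add_const (hx : ∀ i, x i ≠ 0) (c d : ℝ) :
    hessian (fun y => c * ∑ i, log (y i) + d) x = diagonal fun i => -c / x i ^ 2 := by
  have hne : ∀ᶠ y in 𝓝 x, ∀ i, y i ≠ 0 :=
    eventually_all.2 fun i => (continuous_apply i).continuousAt.eventually_ne (hx i)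
  ext i j
  have hj : HasFDerivAt (fun y : Fin n → ℝ => c / y j)
      ((-c / x j ^ 2) • (proj j : (Fin n → ℝ) →L[ℝ] ℝ)) x := by
    refine (((hasDerivAt_inv (hx j)).comp_hasFDerivAt x
      (hasFDerivAt_apply (𝕜 := ℝ) j x)).const_mul c).congr_fderiv ?_
    rw [smul_smul]
    congr 1
    ring
  have hpd : pd j (fun y => c * ∑ i, log (y i) + d) =ᶠ[𝓝 x] fun y => c / y j :=
    hne.mono fun y hy => pd_const_mul_sum_log_add_const hy c d j
  rw [hessian, of_apply, hpd.pd_eq i, hj.pd_eq, diagonal_apply]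
  rcases eq_or_ne i j with rfl | hij
  · simp
  · simp [hij, hij.symm]

end PartialDerivatives

theorem Matrix.posDef_fin_two_of {a b c : ℝ} (ha : 0 < a) (hdet : 0 < !![a, b; b, c].det) :
    !![a, b; b, c].PosDef := by
  rw [det_fin_two_of] at hdet
  refine PosDef.of_dotProduct_mulVec_pos ?_ fun v hv => ?_
  · ext i j
    fin_cases i <;> fin_cases j <;> rfl
  have hquad : a * (star v ⬝ᵥ (!![a, b; b, c] *ᵥ v)) =
      (a * v 0 + b * v 1) ^ 2 + (a * c - b * b) * v 1 ^ 2 := by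
    simp only [dotProduct, Pi.star_apply, star_trivial, cons_mulVec, empty_mulVec, Fin.sum_univ_two,
      cons_val_zero, cons_val_one, cons_val_fin_one]
    ring
  refine pos_of_mul_pos_right (hquad ▸ ?_) ha.le
  rcases eq_or_ne (v 1) 0 with h1 | h1
  · have h0 : v 0 ≠ 0 := fun h0 => hv (funext <| Fin.forall_fin_two.2 ⟨h0, h1⟩)
    refine add_pos_of_pos_of_nonneg ?_ (mul_nonneg hdet.le (sq_nonneg _))
    rw [h1, mul_zero, add_zero]
    exact sq_pos_of_ne_zero (mul_ne_zero ha.ne' h0)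
  · exact add_pos_of_nonneg_of_pos (sq_nonneg _) (mul_pos hdet (sq_pos_of_ne_zero h1))

section InverseGaussian

variable {θ : Fin 2 → ℝ}

theorem eventually_pos_mul (hθ : 0 < θ 0 * θ 1) : ∀ᶠ y in 𝓝 θ, 0 < y 0 * y 1 :=
  have hcont : Continuous fun y : Fin 2 → ℝ => y 0 * y 1 := by fun_prop
  (hcont.tendsto θ).eventually_const_lt hθ

theorem hasFDerivAt_sqrt_mul (hθ : 0 < θ 0 * θ 1) :
    HasFDerivAt (fun y : Fin 2 → ℝ => √(y 0 * y 1))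
      ((√(θ 0 * θ 1) / (2 * θ 0)) • (proj 0 : (Fin 2 → ℝ) →L[ℝ] ℝ) +
        (√(θ 0 * θ 1) / (2 * θ 1)) • proj 1) θ := by
  have h0 : θ 0 ≠ 0 := left_ne_zero_of_mul hθ.ne'
  have h1 : θ 1 ≠ 0 := right_ne_zero_of_mul hθ.ne'
  have hs : √(θ 0 * θ 1) ^ 2 = θ 0 * θ 1 := sq_sqrt hθ.le
  have hprod := (hasFDerivAt_apply (𝕜 := ℝ) 0 θ).mul (hasFDerivAt_apply 1 θ)
  refine (hprod.sqrt hθ.ne').congr_fderiv ?_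
  ext v
  simp only [Pi.mul_apply, _root_.add_apply, _root_.smul_apply, proj_apply, smul_eq_mul, smul_add]
  field_simp
  rw [hs]
  ring

theorem hasFDerivAt_ΦInvGau (hθ : 0 < θ 0 * θ 1) :
    HasFDerivAt ΦInvGau
      ((-√(θ 0 * θ 1) / (2 * θ 0)) • (proj 0 : (Fin 2 → ℝ) →L[ℝ] ℝ) +
        (-(√(θ 0 * θ 1) + 1) / (2 * θ 1)) • proj 1) θ := by
  have h1 : -θ 1 ≠ 0 := neg_ne_zero.2 (right_ne_zero_of_mul hθ.ne')
  refine ((hasFDerivAt_sqrt_mul hθ).neg.sub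
    (((hasFDerivAt_apply (𝕜 := ℝ) 1 θ).neg.log h1).const_mul (1 / 2))).congr_fderiv ?_
  ext v
  simp only [_root_.sub_apply, _root_.add_apply, _root_.neg_apply, _root_.smul_apply, proj_apply,
    smul_eq_mul, Pi.neg_apply]
  field_simp
  ring

theorem pd_zero_ΦInvGau_eventuallyEq (hθ : 0 < θ 0 * θ 1) :
    pd 0 ΦInvGau =ᶠ[𝓝 θ] fun y => -√(y 0 * y 1) / (2 * y 0) :=
  (eventually_pos_mul hθ).mono fun y hy => by simp [(hasFDerivAt_ΦInvGau hy).pd_eq]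

theorem pd_one_ΦInvGau_eventuallyEq (hθ : 0 < θ 0 * θ 1) :
    pd 1 ΦInvGau =ᶠ[𝓝 θ] fun y => -(√(y 0 * y 1) + 1) / (2 * y 1) :=
  (eventually_pos_mul hθ).mono fun y hy => by simp [(hasFDerivAt_ΦInvGau hy).pd_eq]

theorem hessian_ΦInvGau (hθ : 0 < θ 0 * θ 1) :
    hessian ΦInvGau θ =
      !![√(θ 0 * θ 1) / (4 * θ 0 ^ 2), -√(θ 0 * θ 1) / (4 * θ 0 * θ 1);
        -√(θ 0 * θ 1) / (4 * θ 0 * θ 1), (√(θ 0 * θ 1) + 2) / (4 * θ 1 ^ 2)] := by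
  have h0 : θ 0 ≠ 0 := left_ne_zero_of_mul hθ.ne'
  have h1 : θ 1 ≠ 0 := right_ne_zero_of_mul hθ.ne'
  have hgrad0 := (hasFDerivAt_sqrt_mul hθ).neg.mul
    ((hasDerivAt_inv (mul_ne_zero two_ne_zero h0)).comp_hasFDerivAt θ
      ((hasFDerivAt_apply (𝕜 := ℝ) 0 θ).const_mul 2))
  have hgrad1 := ((hasFDerivAt_sqrt_mul hθ).add_const 1).neg.mul
    ((hasDerivAt_inv (mul_ne_zero two_ne_zero h1)).comp_hasFDerivAt θ
      ((hasFDerivAt_apply (𝕜 := ℝ) 1 θ).const_mul 2))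
  have col0 := hessian_apply_eq_of_eventuallyEq_pd (pd_zero_ΦInvGau_eventuallyEq hθ) hgrad0
  have col1 := hessian_apply_eq_of_eventuallyEq_pd (pd_one_ΦInvGau_eventuallyEq hθ) hgrad1
  ext i j
  fin_cases i <;> fin_cases j <;>
    simp only [Fin.zero_eta, Fin.mk_one, Fin.isValue, col0, col1, of_apply, cons_val',
      cons_val_zero, cons_val_one, cons_val_fin_one, Function.comp_apply, Pi.neg_apply,
      _root_.add_apply, _root_.neg_apply, _root_.smul_apply, proj_apply, smul_eq_mul,
      Pi.single_eq_same, Pi.single_eq_of_ne one_ne_zero, Pi.single_eq_of_ne zero_ne_one] <;>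
    field_simp <;>
    ring

theorem det_hessian_ΦInvGau (hθ : 0 < θ 0 * θ 1) :
    (hessian ΦInvGau θ).det = √(θ 0 * θ 1) / (8 * θ 0 ^ 2 * θ 1 ^ 2) := by
  have h0 : θ 0 ≠ 0 := left_ne_zero_of_mul hθ.ne'
  have h1 : θ 1 ≠ 0 := right_ne_zero_of_mul hθ.ne'
  rw [hessian_ΦInvGau hθ, det_fin_two_of]
  field_simp
  ring

theorem log_det_hessian_ΦInvGau (hθ : 0 < θ 0 * θ 1) :
    log (hessian ΦInvGau θ).det = -(3 / 2) * ∑ i, log (θ i) + -log 8 := by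
  have h0 : θ 0 ≠ 0 := left_ne_zero_of_mul hθ.ne'
  have h1 : θ 1 ≠ 0 := right_ne_zero_of_mul hθ.ne'
  rw [det_hessian_ΦInvGau hθ, log_div (sqrt_pos.2 hθ).ne' (by positivity), log_sqrt hθ.le,
    log_mul h0 h1, log_mul (by positivity) (by positivity), log_mul (by norm_num) (by positivity),
    log_pow, log_pow, Fin.sum_univ_two]
  push_cast
  ring

theorem hessian_log_det_hessian_ΦInvGau (hθ : 0 < θ 0 * θ 1) :
    hessian (fun y => log (hessian ΦInvGau y).det) θ = diagonal fun i => 3 / (2 * θ i ^ 2) := by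
  have hne : ∀ i, θ i ≠ 0 :=
    Fin.forall_fin_two.2 ⟨left_ne_zero_of_mul hθ.ne', right_ne_zero_of_mul hθ.ne'⟩
  have hlog : (fun y => log (hessian ΦInvGau y).det) =ᶠ[𝓝 θ]
      fun y => -(3 / 2) * ∑ i, log (y i) + -log 8 :=
    (eventually_pos_mul hθ).mono fun y hy => log_det_hessian_ΦInvGau hy
  rw [hlog.hessian_eq, hessian_const_mul_sum_log_add_const hne]
  congr 1
  funext i
  field_simp

theorem posDef_hessian_ΦInvGau (hθ : 0 < θ 0 * θ 1) : (hessian ΦInvGau θ).PosDef := by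
  have h0 : θ 0 ≠ 0 := left_ne_zero_of_mul hθ.ne'
  have h1 : θ 1 ≠ 0 := right_ne_zero_of_mul hθ.ne'
  have hs : 0 < √(θ 0 * θ 1) := sqrt_pos.2 hθ
  have hdet := det_hessian_ΦInvGau hθ
  rw [hessian_ΦInvGau hθ] at hdet ⊢
  exact posDef_fin_two_of (by positivity) (by rw [hdet]; positivity)

theorem posDef_hessian_log_det_hessian_ΦInvGau (hθ : 0 < θ 0 * θ 1) :
    (hessian (fun y => log (hessian ΦInvGau y).det) θ).PosDef := by
  have hne : ∀ i, θ i ≠ 0 :=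
    Fin.forall_fin_two.2 ⟨left_ne_zero_of_mul hθ.ne', right_ne_zero_of_mul hθ.ne'⟩
  rw [hessian_log_det_hessian_ΦInvGau hθ]
  exact PosDef.diagonal fun i => by have := hne i; positivity

end InverseGaussian

/-- `𝕄_InvGau` has negative Ricci curvature: the Hessian of the inverse Gaussian
log-partition function is positive definite, has the stated determinant, and the
Hessian of `log det Hess Φ` is the stated positive definite diagonal matrix. -/
theorem invGau_negative_ricci (θ : Fin 2 → ℝ) (h1 : θ 0 < 0) (h2 : θ 1 < 0) :
    (hessian ΦInvGau θ).PosDef ∧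
    (hessian ΦInvGau θ).det =
      Real.sqrt (θ 0 * θ 1) / (8 * (θ 0) ^ 2 * (θ 1) ^ 2) ∧
    hessian (fun y => Real.log ((hessian ΦInvGau y).det)) θ =
      !![3 / (2 * (θ 0) ^ 2), 0; 0, 3 / (2 * (θ 1) ^ 2)] ∧
    (hessian (fun y => Real.log ((hessian ΦInvGau y).det)) θ).PosDef ∧
    (∀ v : Fin 2 → ℝ, v ≠ 0 →
      v ⬝ᵥ ((-(hessian (fun y => Real.log ((hessian ΦInvGau y).det)) θ)) *ᵥ v) < 0) := by
  have hθ : 0 < θ 0 * θ 1 := mul_pos_of_neg_of_neg h1 h2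
  have hRicPos := posDef_hessian_log_det_hessian_ΦInvGau hθ
  refine ⟨posDef_hessian_ΦInvGau hθ, det_hessian_ΦInvGau hθ,
    (hessian_log_det_hessian_ΦInvGau hθ).trans (diagonal_fin_two _), hRicPos, fun v hv => ?_⟩
  have hpos := hRicPos.dotProduct_mulVec_pos hv
  rw [star_trivial] at hpos
  rwa [neg_mulVec, dotProduct_neg, neg_lt_zero]
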